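/- Let K be a field and u ∈ Kˣ a unit (u plays the role of υ^{1/2}). Let M be the free K-module with basis {u⃗_y}_{y ∈ ℝ}. For reals a < b with b − a < 1 define K-linear endomorphisms of M by: E_{a,b}(u⃗_y) = u⁻¹·u⃗_{y+a−b} if a + y ∈ ℤ and 0 otherwise; F_{a,b}(u⃗_y) = u·u⃗_{y+b−a} if b + y ∈ ℤ and 0 otherwise. Then for all reals a < b < c with c − a < 1, the join relations E_{a,c} = u·(E_{b,c} ∘ E_{a,b}) − u⁻¹·(E_{a,b} ∘ E_{b,c}) and F_{a,c} = u⁻¹·(F_{a,b} ∘ F_{b,c}) − u·(F_{b,c} ∘ F_{a,b}) hold as equalities of K-linear endomorphisms of M. (Moreover the subtracted composite in each identity is identically zero: E_{a,b} ∘ E_{b,c} = 0 and F_{b,c} ∘ F_{a,b} = 0 when 0 < c − a < 1.) -/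

import Mathlib

/-!
On basis vectors both `E_{b,c} ∘ E_{a,b}` and `E_{a,c}` send `u⃗_y` to a multiple of
`u⃗_{y+a−c}` under the same condition `a + y ∈ ℤ`, so `E_{b,c} ∘ E_{a,b} = u⁻¹ E_{a,c}` for all
`a, b, c`; likewise `F_{a,b} ∘ F_{b,c} = u F_{a,c}`. The reversed composites are nonzero on
`u⃗_y` only if two reals differing by `c − a` are both integers, impossible for `0 < c − a < 1`.
-/

open scoped Classical

/-- The operator `E_{a,b}` on the free module with basis `{u⃗_y}_{y∈ℝ}`:
`E_{a,b}(u⃗_y) = u⁻¹·u⃗_{y+a−b}` if `a + y ∈ ℤ`, and `0` otherwise. -/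
noncomputable def Eop {K : Type*} [Field K] (u : Kˣ) (a b : ℝ) :
    (ℝ →₀ K) →ₗ[K] (ℝ →₀ K) :=
  Finsupp.lsum K fun y =>
    if ∃ k : ℤ, a + y = (k : ℝ) then ((u⁻¹ : Kˣ) : K) • Finsupp.lsingle (y + a - b) else 0

/-- The operator `F_{a,b}`: `F_{a,b}(u⃗_y) = u·u⃗_{y+b−a}` if `b + y ∈ ℤ`, and `0` otherwise. -/
noncomputable def Fop {K : Type*} [Field K] (u : Kˣ) (a b : ℝ) :
    (ℝ →₀ K) →ₗ[K] (ℝ →₀ K) :=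
  Finsupp.lsum K fun y =>
    if ∃ k : ℤ, b + y = (k : ℝ) then ((u : K)) • Finsupp.lsingle (y + b - a) else 0

/-- The operator `K_{c,d}^{s}` (for `s = ±1`): `K_{c,d}^{s}(u⃗_y) = v^{s·ε(y)}·u⃗_y`, where
`v = u²` and `ε(y) = 𝟙[d+y ∈ ℤ] − 𝟙[c+y ∈ ℤ]`. -/
noncomputable def Kop {K : Type*} [Field K] (u : Kˣ) (c d : ℝ) (s : ℤ) :
    (ℝ →₀ K) →ₗ[K] (ℝ →₀ K) :=
  Finsupp.lsum K fun y =>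
    ((((u ^ 2) ^ (s * ((if ∃ k : ℤ, d + y = (k : ℝ) then 1 else 0) -
        (if ∃ k : ℤ, c + y = (k : ℝ) then 1 else 0)))) : Kˣ) : K) • Finsupp.lsingle y

theorem intCast_sub_intCast_notMem_Ioo {R : Type*} [Ring R] [LinearOrder R]
    [IsStrictOrderedRing R] (m n : ℤ) : (m : R) - n ∉ Set.Ioo 0 1 := by
  rintro ⟨hpos, hlt⟩
  rw [← Int.cast_sub] at hpos hlt
  have : (0 : ℤ) < m - n := mod_cast hpos
  have : m - n < 1 := mod_cast hlt
  omega

section Operators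

variable {K : Type*} [Field K] (u : Kˣ)

theorem Eop_single (a b y : ℝ) (k : K) :
    Eop u a b (Finsupp.single y k) =
      if ∃ n : ℤ, a + y = n then ((u⁻¹ : Kˣ) : K) • Finsupp.single (y + a - b) k else 0 := by
  rw [Eop, Finsupp.lsum_single]
  split_ifs <;> simp

theorem Fop_single (a b y : ℝ) (k : K) :
    Fop u a b (Finsupp.single y k) =
      if ∃ n : ℤ, b + y = n then (u : K) • Finsupp.single (y + b - a) k else 0 := by
  rw [Fop, Finsupp.lsum_single]
  split_ifs <;> simp

theorem Eop_comp_Eop (a b c : ℝ) :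
    Eop u b c ∘ₗ Eop u a b = ((u⁻¹ : Kˣ) : K) • Eop u a c := by
  refine Finsupp.lhom_ext fun y k => ?_
  simp only [LinearMap.comp_apply, LinearMap.smul_apply, Eop_single]
  split_ifs with h
  · rw [map_smul, Eop_single, show b + (y + a - b) = a + y by ring, if_pos h,
      show y + a - b + b - c = y + a - c by ring]
  · simp

theorem Fop_comp_Fop (a b c : ℝ) :
    Fop u a b ∘ₗ Fop u b c = (u : K) • Fop u a c := by
  refine Finsupp.lhom_ext fun y k => ?_
  simp only [LinearMap.comp_apply, LinearMap.smul_apply, Fop_single]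
  split_ifs with h
  · rw [map_smul, Fop_single, show b + (y + c - b) = c + y by ring, if_pos h,
      show y + c - b + b - a = y + c - a by ring]
  · simp

variable {a c : ℝ} (hac : c - a ∈ Set.Ioo 0 1)
include hac

theorem Eop_comp_Eop_eq_zero (b : ℝ) : Eop u a b ∘ₗ Eop u b c = 0 := by
  refine Finsupp.lhom_ext fun y k => ?_
  simp only [LinearMap.comp_apply, LinearMap.zero_apply, Eop_single]
  split_ifs with h
  · rw [map_smul, Eop_single, if_neg, smul_zero]
    rintro ⟨m, hm⟩
    obtain ⟨n, hn⟩ := h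
    exact intCast_sub_intCast_notMem_Ioo n m (by rw [← hn, ← hm]; convert hac using 1; ring)
  · simp

theorem Fop_comp_Fop_eq_zero (b : ℝ) : Fop u b c ∘ₗ Fop u a b = 0 := by
  refine Finsupp.lhom_ext fun y k => ?_
  simp only [LinearMap.comp_apply, LinearMap.zero_apply, Fop_single]
  split_ifs with h
  · rw [map_smul, Fop_single, if_neg, smul_zero]
    rintro ⟨m, hm⟩
    obtain ⟨n, hn⟩ := h
    exact intCast_sub_intCast_notMem_Ioo m n (by rw [← hn, ← hm]; convert hac using 1; ring)
  · simp

end Operators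

/-- the join relations
`E_{a,c} = u·(E_{b,c}∘E_{a,b}) − u⁻¹·(E_{a,b}∘E_{b,c})` and
`F_{a,c} = u⁻¹·(F_{a,b}∘F_{b,c}) − u·(F_{b,c}∘F_{a,b})` hold on the fundamental
representation for all `a < b < c` with `c − a < 1`; moreover the subtracted composites
vanish: `E_{a,b}∘E_{b,c} = 0` and `F_{b,c}∘F_{a,b} = 0`. -/
theorem EF_join_relations {K : Type*} [Field K] (u : Kˣ) (a b c : ℝ)
    (hab : a < b) (hbc : b < c) (hlen : c - a < 1) :
    Eop u a c = (u : K) • (Eop u b c ∘ₗ Eop u a b) -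
        ((u⁻¹ : Kˣ) : K) • (Eop u a b ∘ₗ Eop u b c) ∧
    Fop u a c = ((u⁻¹ : Kˣ) : K) • (Fop u a b ∘ₗ Fop u b c) -
        (u : K) • (Fop u b c ∘ₗ Fop u a b) ∧
    Eop u a b ∘ₗ Eop u b c = 0 ∧
    Fop u b c ∘ₗ Fop u a b = 0 := by
  have hac : c - a ∈ Set.Ioo 0 1 := ⟨by linarith, hlen⟩
  have hE := Eop_comp_Eop_eq_zero u hac b
  have hF := Fop_comp_Fop_eq_zero u hac b
  refine ⟨?_, ?_, hE, hF⟩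
  · rw [hE, Eop_comp_Eop, smul_smul, Units.mul_inv, one_smul, smul_zero]
    exact (sub_zero (Eop u a c)).symm
  · rw [hF, Fop_comp_Fop, smul_smul, Units.inv_mul, one_smul, smul_zero]
    exact (sub_zero (Fop u a c)).symm
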